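/- Let A be a C*-algebra and let T : A → A be a positive bounded linear operator. Then for every λ ∈ ℂ with |λ| > r(T) one has the operator-norm bound ‖(λ·id − T)⁻¹‖ ≤ 16 · ‖(|λ|·id − T)⁻¹‖. -/

import Mathlib

/-!
For `|λ| > r(T)` the resolvent is the Neumann series `R(λ) = ∑ λ⁻ⁿ⁻¹ Tⁿ`. On a positive `y`,
both `R(λ) y` and `R(|λ|) y` are series in the positive elements `Tⁿ y`, and the coefficients
`|λ|⁻ⁿ⁻¹` of the second dominate the moduli of those of the first. Splitting each complex
coefficient into the positive and negative parts of its real and imaginary parts, and using that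
the norm is monotone on positive elements, gives `‖R(λ) y‖ ≤ 4 ‖R(|λ|) y‖`. Writing an arbitrary
element as a combination of four positive elements of no larger norm costs another factor `4`.
-/

open scoped ENNReal

namespace spectrum

variable {B : Type*} [NormedRing B] [NormedAlgebra ℂ B] [CompleteSpace B]

/-- The series is the Taylor series of `z ↦ (1 - z • a)⁻¹`, which is analytic on `‖z‖ < r(a)⁻¹`. -/
theorem inv_spectralRadius_le_radius_pow (a : B) :
    (spectralRadius ℂ a)⁻¹ ≤ FormalMultilinearSeries.radius
      (fun n => ContinuousMultilinearMap.mkPiRing ℂ (Fin n) (a ^ n)) :=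
  ENNReal.le_of_forall_pos_nnreal_lt fun _ r_pos r_lt =>
    ((hasFPowerSeriesOnBall_inverse_one_sub_smul ℂ a).exchange_radius
      ((differentiableOn_inverse_one_sub_smul r_lt).hasFPowerSeriesOnBall r_pos)).r_le

theorem summable_norm_inv_smul_pow (a : B) {l : ℂ} (hl : spectralRadius ℂ a < ‖l‖₊) :
    Summable fun n => ‖(l⁻¹ • a) ^ n‖ := by
  have hl₀ : l ≠ 0 := by rintro rfl; simp at hl
  have hlt : (‖l⁻¹‖₊ : ℝ≥0∞) < (spectralRadius ℂ a)⁻¹ := by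
    rwa [nnnorm_inv, ENNReal.coe_inv (nnnorm_ne_zero_iff.mpr hl₀), ENNReal.inv_lt_inv]
  have hmem : l⁻¹ ∈ Metric.eball (0 : ℂ) _ :=
    Metric.mem_eball.mpr ((edist_zero_right _).trans_lt hlt |>.trans_le
      (inv_spectralRadius_le_radius_pow a))
  simpa [smul_pow] using FormalMultilinearSeries.summable_norm_apply _ hmem

theorem summable_norm_inv_pow_smul_pow (a : B) {l : ℂ} (hl : spectralRadius ℂ a < ‖l‖₊) :
    Summable fun n => ‖l⁻¹ ^ (n + 1) • a ^ n‖ :=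
  ((summable_norm_inv_smul_pow a hl).mul_left ‖l⁻¹‖).congr fun n => by
    rw [pow_succ', mul_smul, ← smul_pow, norm_smul]

theorem hasSum_resolvent (a : B) {l : ℂ} (hl : spectralRadius ℂ a < ‖l‖₊) :
    HasSum (fun n => l⁻¹ ^ (n + 1) • a ^ n) (resolvent a l) := by
  have hl₀ : l ≠ 0 := by rintro rfl; simp at hl
  have hx : Summable ((l⁻¹ • a) ^ ·) := .of_norm (summable_norm_inv_smul_pow a hl)
  have hfactor : algebraMap ℂ B l - a = l • (1 - l⁻¹ • a) := by
    rw [smul_sub, smul_inv_smul₀ hl₀, Algebra.algebraMap_eq_smul_one]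
  let u : Bˣ :=
    { val := algebraMap ℂ B l - a
      inv := l⁻¹ • ∑' n, (l⁻¹ • a) ^ n
      val_inv := by
        rw [hfactor, smul_mul_smul_comm, mul_inv_cancel₀ hl₀, hx.one_sub_mul_tsum_pow, one_smul]
      inv_val := by
        rw [hfactor, smul_mul_smul_comm, inv_mul_cancel₀ hl₀, hx.tsum_pow_mul_one_sub, one_smul] }
  have hres : resolvent a l = l⁻¹ • ∑' n, (l⁻¹ • a) ^ n := Ring.inverse_unit u
  rw [hres]
  exact (hx.hasSum.const_smul l⁻¹).congr_fun fun n => by rw [smul_pow, smul_smul, pow_succ']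

end spectrum

theorem summable_smul_of_norm_le {ι 𝕜 E : Type*} [NormedField 𝕜] [NormedAddCommGroup E]
    [NormedSpace 𝕜 E] [CompleteSpace E] {c : ι → 𝕜} {d : ι → ℝ} {v : ι → E}
    (hc : ∀ i, ‖c i‖ ≤ d i) (hd : Summable fun i => d i * ‖v i‖) :
    Summable fun i => c i • v i :=
  .of_norm_bounded hd fun i => by rw [norm_smul]; gcongr; exact hc i

namespace CStarAlgebra

variable {A : Type*} [NonUnitalCStarAlgebra A] [PartialOrder A] [StarOrderedRing A]
  {ι : Type*} {v : ι → A} {d : ι → ℝ}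

theorem norm_tsum_smul_le_of_nonneg {e : ι → ℝ} (hv : ∀ i, 0 ≤ v i) (he : ∀ i, 0 ≤ e i)
    (hed : ∀ i, e i ≤ d i) (hd : Summable fun i => d i * ‖v i‖) :
    ‖∑' i, e i • v i‖ ≤ ‖∑' i, d i • v i‖ := by
  have hd₀ : ∀ i, 0 ≤ d i := fun i => (he i).trans (hed i)
  have he' : Summable fun i => e i • v i :=
    summable_smul_of_norm_le (fun i => (Real.norm_of_nonneg (he i)).trans_le (hed i)) hd
  have hd' : Summable fun i => d i • v i :=
    summable_smul_of_norm_le (fun i => (Real.norm_of_nonneg (hd₀ i)).le) hd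
  exact norm_le_norm_of_nonneg_of_le (tsum_nonneg fun i => smul_nonneg (he i) (hv i))
    (he'.tsum_le_tsum (fun i => smul_le_smul_of_nonneg_right (hed i) (hv i)) hd')

theorem norm_tsum_real_smul_le {t : ι → ℝ} (hv : ∀ i, 0 ≤ v i) (ht : ∀ i, |t i| ≤ d i)
    (hd : Summable fun i => d i * ‖v i‖) :
    ‖∑' i, t i • v i‖ ≤ 2 * ‖∑' i, d i • v i‖ := by
  have hpos : ∀ i, (t i)⁺ ≤ d i := fun i => (sup_le (le_abs_self _) (abs_nonneg _)).trans (ht i)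
  have hneg : ∀ i, (t i)⁻ ≤ d i := fun i => (sup_le (neg_le_abs _) (abs_nonneg _)).trans (ht i)
  have hsummable : ∀ s : ι → ℝ, (∀ i, 0 ≤ s i) → (∀ i, s i ≤ d i) →
      Summable fun i => s i • v i := fun s hs hsd =>
    summable_smul_of_norm_le (fun i => (Real.norm_of_nonneg (hs i)).trans_le (hsd i)) hd
  have hsplit : ∑' i, t i • v i = ∑' i, (t i)⁺ • v i - ∑' i, (t i)⁻ • v i := by
    rw [← (hsummable _ (fun i => posPart_nonneg _) hpos).tsum_sub
      (hsummable _ (fun i => negPart_nonneg _) hneg)]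
    simp only [← sub_smul, posPart_sub_negPart]
  calc ‖∑' i, t i • v i‖
      ≤ ‖∑' i, (t i)⁺ • v i‖ + ‖∑' i, (t i)⁻ • v i‖ := hsplit ▸ norm_sub_le _ _
    _ ≤ ‖∑' i, d i • v i‖ + ‖∑' i, d i • v i‖ := by
        gcongr
        · exact norm_tsum_smul_le_of_nonneg hv (fun i => posPart_nonneg _) hpos hd
        · exact norm_tsum_smul_le_of_nonneg hv (fun i => negPart_nonneg _) hneg hd
    _ = 2 * ‖∑' i, d i • v i‖ := by ring

theorem norm_tsum_smul_le {c : ι → ℂ} (hv : ∀ i, 0 ≤ v i) (hc : ∀ i, ‖c i‖ ≤ d i)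
    (hd : Summable fun i => d i * ‖v i‖) :
    ‖∑' i, c i • v i‖ ≤ 4 * ‖∑' i, d i • v i‖ := by
  have hre : ∀ i, |(c i).re| ≤ d i := fun i => (Complex.abs_re_le_norm _).trans (hc i)
  have him : ∀ i, |(c i).im| ≤ d i := fun i => (Complex.abs_im_le_norm _).trans (hc i)
  have hsplit : ∑' i, c i • v i = ∑' i, (c i).re • v i + Complex.I • ∑' i, (c i).im • v i := by
    have hre' := summable_smul_of_norm_le (fun i => (Real.norm_eq_abs _).trans_le (hre i)) hd
    have him' := summable_smul_of_norm_le (fun i => (Real.norm_eq_abs _).trans_le (him i)) hd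
    rw [← him'.tsum_const_smul Complex.I, ← hre'.tsum_add (him'.const_smul Complex.I)]
    congr 1 with i
    rw [← Complex.coe_smul, ← Complex.coe_smul, smul_smul, ← add_smul, mul_comm, Complex.re_add_im]
  calc ‖∑' i, c i • v i‖
      ≤ ‖∑' i, (c i).re • v i‖ + ‖∑' i, (c i).im • v i‖ := by
        rw [hsplit]
        refine (norm_add_le _ _).trans_eq ?_
        rw [norm_smul, Complex.norm_I, one_mul]
    _ ≤ 2 * ‖∑' i, d i • v i‖ + 2 * ‖∑' i, d i • v i‖ := by
        gcongr
        · exact norm_tsum_real_smul_le hv hre hd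
        · exact norm_tsum_real_smul_le hv him hd
    _ = 4 * ‖∑' i, d i • v i‖ := by ring

open Complex in
theorem opNorm_le_four_mul_of_nonneg {E : Type*} [SeminormedAddCommGroup E] [NormedSpace ℂ E]
    (S : A →L[ℂ] E) {C : ℝ} (hC : 0 ≤ C) (h : ∀ y, 0 ≤ y → ‖S y‖ ≤ C * ‖y‖) :
    ‖S‖ ≤ 4 * C := by
  refine S.opNorm_le_bound (by positivity) fun a => ?_
  obtain ⟨x, hx_nonneg, hx_norm, rfl⟩ := exists_sum_four_nonneg a
  calc ‖S (∑ i : Fin 4, I ^ (i : ℕ) • x i)‖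
      ≤ ∑ i : Fin 4, ‖S (x i)‖ := by
        simpa [norm_smul] using norm_sum_le Finset.univ fun i : Fin 4 => S (I ^ (i : ℕ) • x i)
    _ ≤ ∑ _i : Fin 4, C * ‖∑ i : Fin 4, I ^ (i : ℕ) • x i‖ := by
        gcongr with i
        exact (h _ (hx_nonneg i)).trans (by gcongr; exact hx_norm i)
    _ = 4 * C * ‖∑ i : Fin 4, I ^ (i : ℕ) • x i‖ := by simp; ring

end CStarAlgebra

theorem norm_resolvent_apply_le_of_nonneg {A : Type*} [NonUnitalCStarAlgebra A] [PartialOrder A]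
    [StarOrderedRing A] (T : A →L[ℂ] A) (hT : ∀ x : A, 0 ≤ x → 0 ≤ T x) {lam : ℂ}
    (hlam : spectralRadius ℂ T < ‖lam‖₊) {y : A} (hy : 0 ≤ y) :
    ‖resolvent T lam y‖ ≤ 4 * ‖resolvent T ((‖lam‖ : ℝ) : ℂ) y‖ := by
  have hpow : ∀ n : ℕ, 0 ≤ (T ^ n) y := fun n => by
    induction n with
    | zero => simpa using hy
    | succ n ih => rw [pow_succ']; exact hT _ ih
  have hlam' : spectralRadius ℂ T < ‖((‖lam‖ : ℝ) : ℂ)‖₊ := by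
    rwa [Complex.nnnorm_real, nnnorm_norm]
  have happly : ∀ μ : ℂ, spectralRadius ℂ T < ‖μ‖₊ →
      resolvent T μ y = ∑' n, μ⁻¹ ^ (n + 1) • (T ^ n) y := fun μ hμ =>
    ((spectrum.hasSum_resolvent T hμ).mapL (ContinuousLinearMap.apply ℂ A y)).tsum_eq.symm
  have hsummable : Summable fun n => ‖lam‖⁻¹ ^ (n + 1) * ‖(T ^ n) y‖ :=
    .of_nonneg_of_le (fun n => by positivity) (fun n => by
        rw [norm_smul, norm_pow, norm_inv, mul_assoc]
        gcongr
        exact (T ^ n).le_opNorm y)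
      ((spectrum.summable_norm_inv_pow_smul_pow T hlam).mul_right ‖y‖)
  have hreal : ∀ n, ((‖lam‖ : ℝ) : ℂ)⁻¹ ^ (n + 1) • (T ^ n) y = (‖lam‖⁻¹ ^ (n + 1)) • (T ^ n) y :=
    fun n => by rw [← Complex.ofReal_inv, ← Complex.ofReal_pow, Complex.coe_smul]
  rw [happly lam hlam, happly _ hlam']
  simp only [hreal]
  exact CStarAlgebra.norm_tsum_smul_le hpow (fun n => by simp) hsummable

/-- For a positive bounded operator `T` on a C*-algebra and `λ ∈ ℂ` with `|λ| > r(T)`,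
one has `‖(λ - T)⁻¹‖ ≤ 16 ‖(|λ| - T)⁻¹‖`. -/
theorem norm_resolvent_le_of_positive
    {A : Type*} [NonUnitalCStarAlgebra A] [PartialOrder A] [StarOrderedRing A]
    (T : A →L[ℂ] A) (hT : ∀ x : A, 0 ≤ x → 0 ≤ T x)
    (lam : ℂ) (hlam : spectralRadius ℂ T < (‖lam‖₊ : ENNReal)) :
    ‖resolvent T lam‖ ≤ 16 * ‖resolvent T ((‖lam‖ : ℝ) : ℂ)‖ := by
  have hnonneg : ∀ y : A, 0 ≤ y →
      ‖resolvent T lam y‖ ≤ 4 * ‖resolvent T ((‖lam‖ : ℝ) : ℂ)‖ * ‖y‖ := fun y hy =>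
    calc ‖resolvent T lam y‖ ≤ 4 * ‖resolvent T ((‖lam‖ : ℝ) : ℂ) y‖ :=
          norm_resolvent_apply_le_of_nonneg T hT hlam hy
      _ ≤ 4 * ‖resolvent T ((‖lam‖ : ℝ) : ℂ)‖ * ‖y‖ := by
          rw [mul_assoc]; gcongr; exact ContinuousLinearMap.le_opNorm _ y
  calc ‖resolvent T lam‖ ≤ 4 * (4 * ‖resolvent T ((‖lam‖ : ℝ) : ℂ)‖) :=
        CStarAlgebra.opNorm_le_four_mul_of_nonneg _ (by positivity) hnonneg
    _ = 16 * ‖resolvent T ((‖lam‖ : ℝ) : ℂ)‖ := by ring
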